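/- Let ℓ ≥ 1 be an integer, let F be a finite field with |F| ≥ ℓ, let C ⊆ F^n be a linear code of dimension k ≥ 2, and let k' be a positive integer with k' ≤ k - 1 and n ≥ k + k'. Set m = ⌊(k-1)/(k'+1)⌋. Then there exist input lists S_1,…,S_n ⊆ F with |S_i| = ℓ for all i, and ℓ^{m+1} distinct codewords of C, each of which satisfies |agr(c, S_1,…,S_n)| ≥ k + k'. Consequently, C is not ((n-k-k')/n, ℓ, ℓ^{m+1} - 1)-list-recoverable. -/
import Mathlib

lemma exists_vanishing' {F : Type*} [Field F] {n : ℕ}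
    (C : Submodule F (Fin n → F)) (K : Finset (Fin n))
    (h : K.card < Module.finrank F C) :
    ∃ c ∈ C, c ≠ 0 ∧ ∀ i ∈ K, c i = 0 := by
  by_contra hcon
  push_neg at hcon
  let f : C →ₗ[F] ({ i // i ∈ K } → F) :=
    { toFun := fun v i => v.1 i.1
      map_add' := by intros; rfl
      map_smul' := by intros; rfl }
  have hinj : Function.Injective f := by
    rw [← LinearMap.ker_eq_bot, LinearMap.ker_eq_bot']
    intro v hv
    by_contra hv0
    have hv1 : (v : Fin n → F) ≠ 0 := fun h0 => hv0 (Subtype.ext h0)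
    obtain ⟨i, hiK, hi⟩ := hcon v.1 v.2 hv1
    exact hi (congrFun hv ⟨i, hiK⟩)
  have := LinearMap.finrank_le_finrank_of_injective hinj
  rw [Module.finrank_pi] at this
  rw [Fintype.card_coe] at this
  omega

set_option synthInstance.maxHeartbeats 1000000 in
lemma exists_info_set' {F : Type*} [Field F] {n : ℕ}
    (C : Submodule F (Fin n → F)) :
    ∃ I : Finset (Fin n), I.card = Module.finrank F C ∧
      (∀ c ∈ C, (∀ i ∈ I, c i = 0) → c = 0) := by
  suffices h : ∀ k (C : Submodule F (Fin n → F)), Module.finrank F C = k →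
      ∃ I : Finset (Fin n), I.card = k ∧
        (∀ c ∈ C, (∀ i ∈ I, c i = 0) → c = 0) ∧
        (∀ i ∈ I, ∃ c ∈ C, c i ≠ 0) by
    obtain ⟨I, h1, h2, _⟩ := h _ C rfl
    exact ⟨I, h1, h2⟩
  intro k
  induction k with
  | zero =>
    intro C hk
    refine ⟨∅, rfl, ?_, by simp⟩
    intro c hc _
    have hbot : C = ⊥ := Submodule.finrank_eq_zero.mp hk
    simpa [hbot] using hc
  | succ k ih =>
    intro C hk
    have hC : C ≠ ⊥ := by
      intro hbot
      rw [hbot, finrank_bot] at hk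
      omega
    obtain ⟨c0, hc0C, hc00⟩ := Submodule.exists_mem_ne_zero_of_ne_bot hC
    obtain ⟨i, hi⟩ : ∃ i, c0 i ≠ 0 := by
      by_contra h; push_neg at h; exact hc00 (funext h)
    set C' : Submodule F (Fin n → F) :=
      C ⊓ LinearMap.ker (LinearMap.proj i : (Fin n → F) →ₗ[F] F) with hC'def
    have hC'le : C' ≤ C := inf_le_left
    have hmemC' : ∀ x, x ∈ C' ↔ x ∈ C ∧ x i = 0 := by
      intro x
      simp [hC'def, Submodule.mem_inf, LinearMap.mem_ker]
    -- g : evaluation at i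
    set g : C →ₗ[F] F := (LinearMap.proj i).comp C.subtype with hgdef
    have hker : Submodule.comap C.subtype C' = LinearMap.ker g := by
      ext ⟨x, hx⟩
      simp [hmemC', hx, hgdef]
    have hrange : LinearMap.range g = ⊤ := by
      rw [eq_top_iff]
      intro y _
      refine ⟨(y * (c0 i)⁻¹) • ⟨c0, hc0C⟩, ?_⟩
      simp [hgdef]
      field_simp
    have hrankker : Module.finrank F (LinearMap.ker g) = k := by
      have h1 := LinearMap.finrank_range_add_finrank_ker g
      rw [hrange, finrank_top, hk] at h1
      have h2 : Module.finrank F F = 1 := Module.finrank_self F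
      omega
    have hC'rank : Module.finrank F C' = k := by
      have h3 : Module.finrank F ↥(Submodule.comap C.subtype C')
          = Module.finrank F ↥C' :=
        (Submodule.comapSubtypeEquivOfLe hC'le).finrank_eq
      rw [hker] at h3
      omega
    obtain ⟨I', hI'card, hI'inj, hI'supp⟩ := ih C' hC'rank
    have hiI' : i ∉ I' := by
      intro hmem
      obtain ⟨c, hcC', hci⟩ := hI'supp i hmem
      exact hci ((hmemC' c).mp hcC').2
    refine ⟨insert i I', ?_, ?_, ?_⟩
    · rw [Finset.card_insert_of_notMem hiI', hI'card]
    · intro c hc hz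
      have hci : c i = 0 := hz i (Finset.mem_insert_self _ _)
      have hcC' : c ∈ C' := (hmemC' c).mpr ⟨hc, hci⟩
      exact hI'inj c hcC' (fun j hj => hz j (Finset.mem_insert_of_mem hj))
    · intro j hj
      rcases Finset.mem_insert.mp hj with rfl | hj'
      · exact ⟨c0, hc0C, hi⟩
      · obtain ⟨c, hcC', hcj⟩ := hI'supp j hj'
        exact ⟨c, hC'le hcC', hcj⟩


/-- The agreement set `agr(x, S₁,…,Sₙ) = {i : xᵢ ∈ Sᵢ}`. -/
def agr {F : Type*} [DecidableEq F] {n : ℕ} (x : Fin n → F) (S : Fin n → Finset F) :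
    Finset (Fin n) :=
  Finset.univ.filter fun i => x i ∈ S i

/-- A code `C ⊆ F^n` is `(ρ, ℓ, L)`-list-recoverable if for every choice of input lists
`S₁,…,Sₙ ⊆ F` of size `ℓ`, the number of codewords in the `ρ`-radius list-recovery ball
is at most `L`. -/
def ListRecoverable {F : Type*} [DecidableEq F] {n : ℕ} (C : Set (Fin n → F))
    (ρ : ℝ) (ℓ L : ℕ) : Prop :=
  ∀ S : Fin n → Finset F, (∀ i, (S i).card = ℓ) →
    ({x ∈ C | (1 - ρ) * (n : ℝ) ≤ ((agr x S).card : ℝ)}).ncard ≤ L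

/-- For any linear code `C ⊆ F^n` of dimension `k ≥ 2`, any `1 ≤ k' ≤ k-1` with
`n ≥ k + k'` and `m = ⌊(k-1)/(k'+1)⌋`, there are input lists of size `ℓ` and `ℓ^{m+1}`
distinct codewords each agreeing with the lists on at least `k + k'` coordinates;
consequently `C` is not `((n-k-k')/n, ℓ, ℓ^{m+1}-1)`-list-recoverable. -/
theorem linear_code_not_list_recoverable
    (ℓ : ℕ) (hℓ : 1 ≤ ℓ)
    (F : Type*) [Field F] [Fintype F] [DecidableEq F] (hF : ℓ ≤ Fintype.card F)
    (n k k' : ℕ) (hk : 2 ≤ k) (hk'0 : 0 < k') (hk' : k' ≤ k - 1) (hn : k + k' ≤ n)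
    (C : Submodule F (Fin n → F)) (hdim : Module.finrank F C = k)
    (m : ℕ) (hm : m = (k - 1) / (k' + 1)) :
    (∃ S : Fin n → Finset F, (∀ i, (S i).card = ℓ) ∧
      ∃ D : Finset (Fin n → F), D.card = ℓ ^ (m + 1) ∧
        (↑D : Set (Fin n → F)) ⊆ (C : Set (Fin n → F)) ∧
        ∀ c ∈ D, k + k' ≤ (agr c S).card) ∧
    ¬ ListRecoverable (C : Set (Fin n → F)) (((n : ℝ) - k - k') / n) ℓ (ℓ ^ (m + 1) - 1) := by
  classical
  have hn0 : 0 < n := by omega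
  set s : ℕ := k' + 1 with hs
  have hs0 : 0 < s := by omega
  have hmk : m * s ≤ k - 1 := by
    rw [hm, hs]; exact Nat.div_mul_le_self _ _
  -- the coefficient set A, of size ℓ, containing 0
  obtain ⟨A₀, hA₀sub, hA₀card⟩ : ∃ A₀ ⊆ Finset.univ.erase (0 : F), A₀.card = ℓ - 1 := by
    apply Finset.exists_subset_card_eq
    rw [Finset.card_erase_of_mem (Finset.mem_univ _), Finset.card_univ]
    omega
  have h0A₀ : (0 : F) ∉ A₀ := fun h => (Finset.mem_erase.mp (hA₀sub h)).1 rfl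
  set A : Finset F := insert 0 A₀ with hA
  have h0A : (0 : F) ∈ A := Finset.mem_insert_self _ _
  have hAcard : A.card = ℓ := by
    rw [hA, Finset.card_insert_of_notMem h0A₀, hA₀card]; omega
  -- information set I
  obtain ⟨I, hIcard, hIinj⟩ := exists_info_set' C
  rw [hdim] at hIcard
  -- set J disjoint from I
  obtain ⟨J, hJsub, hJcard⟩ : ∃ J ⊆ Finset.univ \ I, J.card = k' := by
    apply Finset.exists_subset_card_eq
    rw [Finset.card_sdiff_of_subset (Finset.subset_univ I), Finset.card_univ, Fintype.card_fin, hIcard]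
    omega
  have hJnotI : ∀ i ∈ J, i ∉ I := fun i hi => (Finset.mem_sdiff.mp (hJsub hi)).2
  have hIJ : Disjoint I J := by
    rw [Finset.disjoint_right]
    exact hJnotI
  -- enumeration of I
  set ghat : ℕ → Fin n := fun t => I.orderEmbOfFin hIcard ⟨min t (k - 1), by omega⟩ with hghat
  have hghatI : ∀ t, ghat t ∈ I := fun t => I.orderEmbOfFin_mem hIcard _
  have hghatinj : ∀ t t', t ≤ k - 1 → t' ≤ k - 1 → ghat t = ghat t' → t = t' := by
    intro t t' ht ht' h
    have h2 := (I.orderEmbOfFin hIcard).injective h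
    have h3 : min t (k - 1) = min t' (k - 1) := by
      simpa [Fin.mk.injEq] using h2
    omega
  -- the blocks
  set B : ℕ → Finset (Fin n) :=
    fun j => (Finset.Ico (j * s) (min ((j + 1) * s) (m * s + 1))).image ghat with hB
  have hIcoBound : ∀ j t, t ∈ Finset.Ico (j * s) (min ((j + 1) * s) (m * s + 1)) →
      t ≤ k - 1 := by
    intro j t ht
    have := (Finset.mem_Ico.mp ht).2
    omega
  have hBsub : ∀ j, B j ⊆ I := by
    intro j x hx
    obtain ⟨t, _, rfl⟩ := Finset.mem_image.mp hx
    exact hghatI t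
  have hBdisj : ∀ j j', j ≠ j' → Disjoint (B j) (B j') := by
    have key : ∀ j j', j < j' → Disjoint (B j) (B j') := by
      intro j j' hlt
      rw [Finset.disjoint_left]
      intro x hx hx'
      obtain ⟨t, ht, rfl⟩ := Finset.mem_image.mp hx
      obtain ⟨t', ht', he⟩ := Finset.mem_image.mp hx'
      have het : t' = t := hghatinj t' t (hIcoBound j' t' ht') (hIcoBound j t ht) he
      have h1 := Finset.mem_Ico.mp ht
      have h2 := Finset.mem_Ico.mp ht'
      have h3 : (j + 1) * s ≤ j' * s := Nat.mul_le_mul_right s hlt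
      omega
    intro j j' hne
    rcases Nat.lt_or_ge j j' with h | h
    · exact key j j' h
    · exact (key j' j (by omega)).symm
  have hBcard : ∀ j < m, (B j).card = s := by
    intro j hj
    have hmin : min ((j + 1) * s) (m * s + 1) = (j + 1) * s := by
      have : (j + 1) * s ≤ m * s := Nat.mul_le_mul_right s hj
      omega
    rw [hB]
    rw [Finset.card_image_of_injOn]
    · rw [hmin, Nat.card_Ico]
      have : (j + 1) * s = j * s + s := by ring
      omega
    · intro t ht t' ht' h
      exact hghatinj t t' (hIcoBound j t ht) (hIcoBound j t' ht') h
  have hBmne : (B m).Nonempty := by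
    refine ⟨ghat (m * s), Finset.mem_image.mpr ⟨m * s, ?_, rfl⟩⟩
    rw [Finset.mem_Ico]
    constructor
    · exact le_refl _
    · have : m * s < (m + 1) * s := by nlinarith
      omega
  have hBmcard : 1 ≤ (B m).card := Finset.card_pos.mpr hBmne
  -- vanishing sets
  set K : ℕ → Finset (Fin n) :=
    fun j => if j < m then (I \ B j) ∪ J else I \ B m with hK
  have hKcard : ∀ j ≤ m, (K j).card ≤ k - 1 := by
    intro j hj
    rcases Nat.lt_or_ge j m with hlt | hge
    · have : K j = (I \ B j) ∪ J := by rw [hK]; simp [hlt]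
      rw [this]
      have h1 : (I \ B j).card = k - s := by
        rw [Finset.card_sdiff_of_subset (hBsub j), hIcard, hBcard j hlt]
      have h2 := Finset.card_union_le (I \ B j) J
      have hsk : s ≤ k := by omega
      omega
    · have hjm : j = m := by omega
      have : K j = I \ B m := by rw [hK, hjm]; simp
      rw [this, Finset.card_sdiff_of_subset (hBsub m), hIcard]
      omega
  have hKsub1 : ∀ j ≤ m, ∀ i ∈ I, i ∉ B j → i ∈ K j := by
    intro j hj i hiI hiB
    rw [hK]
    rcases Nat.lt_or_ge j m with hlt | hge
    · simp only [if_pos hlt]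
      exact Finset.mem_union_left _ (Finset.mem_sdiff.mpr ⟨hiI, hiB⟩)
    · have hjm : j = m := by omega
      rw [hjm] at hiB ⊢
      simp only [if_neg (lt_irrefl m)]
      exact Finset.mem_sdiff.mpr ⟨hiI, hiB⟩
  have hKsub2 : ∀ j < m, ∀ i ∈ J, i ∈ K j := by
    intro j hj i hiJ
    rw [hK]
    simp only [if_pos hj]
    exact Finset.mem_union_right _ hiJ
  -- the codewords w j
  have hwex : ∀ j : Fin (m + 1), ∃ w, w ∈ C ∧ w ≠ 0 ∧ ∀ i ∈ K j.1, w i = 0 := by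
    intro j
    have hj : j.1 ≤ m := by omega
    apply exists_vanishing' C (K j.1)
    rw [hdim]
    have := hKcard j.1 hj
    omega
  choose w hwC hw0 hwK using hwex
  have hjle : ∀ j : Fin (m + 1), j.1 ≤ m := fun j => by omega
  have hIsplit : ∀ (j : Fin (m + 1)) i, i ∈ I → i ∉ B j.1 → w j i = 0 := by
    intro j i hiI hiB
    exact hwK j i (hKsub1 j.1 (hjle j) i hiI hiB)
  have hJzero : ∀ (j : Fin (m + 1)), j.1 < m → ∀ i ∈ J, w j i = 0 := by
    intro j hj i hiJ
    exact hwK j i (hKsub2 j.1 hj i hiJ)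
  have hBex : ∀ j : Fin (m + 1), ∃ i ∈ B j.1, w j i ≠ 0 := by
    intro j
    by_contra hcon
    push_neg at hcon
    apply hw0 j
    apply hIinj (w j) (hwC j)
    intro i hiI
    by_cases hiB : i ∈ B j.1
    · exact hcon i hiB
    · exact hIsplit j i hiI hiB
  have hmemB : ∀ (j : Fin (m + 1)) i, i ∈ I → w j i ≠ 0 → i ∈ B j.1 := by
    intro j i hiI hne
    by_contra hiB
    exact hne (hIsplit j i hiI hiB)
  have huniq : ∀ i, i ∈ I ∪ J → ∀ j j' : Fin (m + 1), w j i ≠ 0 → w j' i ≠ 0 → j = j' := by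
    intro i hi j j' hj hj'
    rcases Finset.mem_union.mp hi with hiI | hiJ
    · have h1 := hmemB j i hiI hj
      have h2 := hmemB j' i hiI hj'
      by_contra hne
      have hne' : j.1 ≠ j'.1 := fun h => hne (Fin.ext h)
      exact Finset.disjoint_left.mp (hBdisj j.1 j'.1 hne') h1 h2
    · have h1 : j.1 = m := by
        by_contra h
        exact hj (hJzero j (by omega) i hiJ)
      have h2 : j'.1 = m := by
        by_contra h
        exact hj' (hJzero j' (by omega) i hiJ)
      exact Fin.ext (by omega)
  -- the sum of the w's and the lists S
  set wsum : Fin n → F := fun i => ∑ j : Fin (m + 1), w j i with hwsum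
  set S : Fin n → Finset F :=
    fun i => if wsum i = 0 then A else A.image (fun a => a * wsum i) with hS
  have hScard : ∀ i, (S i).card = ℓ := by
    intro i
    rw [hS]
    by_cases h : wsum i = 0
    · simp [h, hAcard]
    · simp only [if_neg h]
      rw [Finset.card_image_of_injective _ (mul_left_injective₀ h), hAcard]
  -- the map φ and the codeword set D
  set φ : (Fin (m + 1) → F) → (Fin n → F) := fun a => ∑ j, a j • w j with hφdef
  have hφ : ∀ a i, φ a i = ∑ j, a j * w j i := by
    intro a i
    rw [hφdef]
    simp [Finset.sum_apply]
  have hφinj : Function.Injective φ := by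
    intro a b hab
    funext j
    obtain ⟨ij, hijB, hij0⟩ := hBex j
    have hijI : ij ∈ I := hBsub j.1 hijB
    have hother : ∀ j' : Fin (m + 1), j' ≠ j → w j' ij = 0 := by
      intro j' hne
      by_contra h
      exact hne (huniq ij (Finset.mem_union_left _ hijI) j' j h hij0)
    have key : ∀ c : Fin (m + 1) → F, φ c ij = c j * w j ij := by
      intro c
      rw [hφ]
      apply Finset.sum_eq_single j
      · intro j' _ hne
        rw [hother j' hne, mul_zero]
      · intro h
        exact absurd (Finset.mem_univ j) h
    have := key a
    rw [hab, key b] at this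
    exact mul_right_cancel₀ hij0 this.symm
  set D : Finset (Fin n → F) :=
    (Fintype.piFinset fun _ : Fin (m + 1) => A).image φ with hD
  have hDcard : D.card = ℓ ^ (m + 1) := by
    rw [hD, Finset.card_image_of_injective _ hφinj, Fintype.card_piFinset]
    simp [hAcard]
  have hDsubC : (↑D : Set (Fin n → F)) ⊆ (C : Set (Fin n → F)) := by
    intro c hc
    obtain ⟨a, _, rfl⟩ := Finset.mem_image.mp hc
    exact Submodule.sum_mem C fun j _ => Submodule.smul_mem C _ (hwC j)
  have hagr : ∀ c ∈ D, k + k' ≤ (agr c S).card := by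
    intro c hc
    obtain ⟨a, haA, rfl⟩ := Finset.mem_image.mp hc
    have haA' : ∀ j, a j ∈ A := fun j => Fintype.mem_piFinset.mp haA j
    have hsub : I ∪ J ⊆ agr (φ a) S := by
      intro i hi
      rw [agr, Finset.mem_filter]
      refine ⟨Finset.mem_univ i, ?_⟩
      by_cases hz : ∀ j : Fin (m + 1), w j i = 0
      · have h1 : φ a i = 0 := by
          rw [hφ]
          exact Finset.sum_eq_zero fun j _ => by rw [hz j, mul_zero]
        have h2 : wsum i = 0 := Finset.sum_eq_zero fun j _ => hz j
        rw [hS]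
        simp only [if_pos h2]
        rw [h1]
        exact h0A
      · push_neg at hz
        obtain ⟨j0, hj0⟩ := hz
        have hother : ∀ j' : Fin (m + 1), j' ≠ j0 → w j' i = 0 := by
          intro j' hne
          by_contra h
          exact hne (huniq i hi j' j0 h hj0)
        have hwsumi : wsum i = w j0 i := by
          rw [hwsum]
          apply Finset.sum_eq_single j0
          · intro j' _ hne
            exact hother j' hne
          · intro h
            exact absurd (Finset.mem_univ j0) h
        have hwsne : wsum i ≠ 0 := by rw [hwsumi]; exact hj0
        have hφi : φ a i = a j0 * wsum i := by
          rw [hφ, hwsumi]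
          apply Finset.sum_eq_single j0
          · intro j' _ hne
            rw [hother j' hne, mul_zero]
          · intro h
            exact absurd (Finset.mem_univ j0) h
        rw [hS]
        simp only [if_neg hwsne]
        exact Finset.mem_image.mpr ⟨a j0, haA' j0, hφi.symm⟩
    have hcardIJ : (I ∪ J).card = k + k' := by
      rw [Finset.card_union_of_disjoint hIJ, hIcard, hJcard]
    calc k + k' = (I ∪ J).card := hcardIJ.symm
      _ ≤ (agr (φ a) S).card := Finset.card_le_card hsub
  -- conclusion
  have hmain : ∃ S : Fin n → Finset F, (∀ i, (S i).card = ℓ) ∧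
      ∃ D : Finset (Fin n → F), D.card = ℓ ^ (m + 1) ∧
        (↑D : Set (Fin n → F)) ⊆ (C : Set (Fin n → F)) ∧
        ∀ c ∈ D, k + k' ≤ (agr c S).card :=
    ⟨S, hScard, D, hDcard, hDsubC, hagr⟩
  refine ⟨hmain, ?_⟩
  intro hLR
  have hbound := hLR S hScard
  have hnne : (n : ℝ) ≠ 0 := Nat.cast_ne_zero.mpr (by omega)
  have hρ : (1 - ((n : ℝ) - k - k') / n) * n = k + k' := by
    field_simp
    ring
  have hsub2 : (↑D : Set (Fin n → F)) ⊆
      {x ∈ (C : Set (Fin n → F)) |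
        (1 - ((n : ℝ) - k - k') / n) * (n : ℝ) ≤ ((agr x S).card : ℝ)} := by
    intro x hx
    refine ⟨hDsubC hx, ?_⟩
    rw [hρ]
    have := hagr x (Finset.mem_coe.mp hx)
    exact_mod_cast this
  have hfin : {x ∈ (C : Set (Fin n → F)) |
      (1 - ((n : ℝ) - k - k') / n) * (n : ℝ) ≤ ((agr x S).card : ℝ)}.Finite :=
    Set.toFinite _
  have hge : ℓ ^ (m + 1) ≤ {x ∈ (C : Set (Fin n → F)) |
      (1 - ((n : ℝ) - k - k') / n) * (n : ℝ) ≤ ((agr x S).card : ℝ)}.ncard := by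
    calc ℓ ^ (m + 1) = D.card := hDcard.symm
      _ = (↑D : Set (Fin n → F)).ncard := (Set.ncard_coe_finset D).symm
      _ ≤ _ := Set.ncard_le_ncard hsub2 hfin
  have hpow : 1 ≤ ℓ ^ (m + 1) := Nat.one_le_pow _ _ (by omega)
  rw [ListRecoverable] at hLR
  omega
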